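/- The point spectrum of the transition operator S acting on the space c of convergent complex sequences equals the point spectrum of S acting on c_0 together with the point {1}; that is, σ_p(S on c) = σ_p(S on c_0) ∪ {1}. In particular, σ_p(S on c) = {1} if and only if the sequence (p_n) does not converge to 1. -/

import Mathlib

/-!
Row `n` of `S` involves `v (n + 1)`, with the nonzero coefficient `p₁⋯p_{ζ_n}`, and otherwise only
entries of index `≤ n`, so an eigenvector is determined by `v 0`. The sequence
`v_λ(n) = ∏_r ι_λ(r)^{a_r(n)}` is an eigenvector for every `λ`, hence every eigenvector is
`v 0 • v_λ`; in particular `v_λ(q_r) = ι_λ(r + 1)`, and `v_1 ≡ 1` gives `1 ∈ σ_p(S on c)`.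

On the rows `n = k d₁`, where `ζ_n = 1`, the equation reads `(λ - 1) v(n) = p₁ (v(n+1) - v(n))`,
so a convergent eigenvector for `λ ≠ 1` tends to `0`. An eigenvector in `c₀` forces
`ι_λ(r) → 0`, and then `p_{r+1} ι_λ(r+1) = ι_λ(r)^{d_r} - (1 - p_{r+1})` forces `p_r → 1`.
Conversely, if `p_r → 1`, take `λ` with `ι_λ(K) = 0` for a large `K` (each `f_j` maps `ℂ` onto
`ℂ`); then `‖ι_λ(r+1)‖ ≤ ‖ι_λ(r)‖ / 2 + 2 (1 - p_{r+1})` for `r ≥ K`, so `ι_λ(r) → 0`, and since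
`‖v_λ(n)‖` is at most a constant times `‖ι_λ‖` at the leading digit of `n`, `v_λ ∈ c₀`.
-/

open Filter Finset
open scoped ENNReal Topology ZeroAtInfty

noncomputable section

namespace AMFC

/-- `q d j = d 0 * d 1 * ... * d j`. -/
def q (d : ℕ → ℕ) (j : ℕ) : ℕ := ∏ i ∈ Finset.range (j + 1), d i

/-- For `j ≥ 1`, `digit d n j = ⌊n / q_{j-1}⌋ mod d_j` is the `j`-th digit of `n`
in the Cantor system of numeration. -/
def digit (d : ℕ → ℕ) (n j : ℕ) : ℕ := (n / q d (j - 1)) % d j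

/-- The counter `ζ_n = min { j ≥ 1 : a_j(n) ≠ d_j - 1 }`. -/
def zeta (d : ℕ → ℕ) (n : ℕ) : ℕ := sInf {j | 1 ≤ j ∧ digit d n j ≠ d j - 1}

open scoped Classical in
/-- The transition probabilities of the stochastic adding machine. -/
def s (d : ℕ → ℕ) (p : ℕ → ℝ) (n m : ℕ) : ℝ :=
  if m = n + 1 then ∏ j ∈ Finset.Icc 1 (zeta d n), p j
  else if m = n then 1 - p 1
  else if h : ∃ r, 1 ≤ r ∧ r + 1 ≤ zeta d n ∧
      n = m + ∑ j ∈ Finset.Icc 1 r, (d j - 1) * q d (j - 1)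
    then (1 - p (h.choose + 1)) * ∏ j ∈ Finset.Icc 1 h.choose, p j
  else 0

/-- `f j (z) = ((z - (1 - p j)) / p j) ^ (d j)`. -/
def f (d : ℕ → ℕ) (p : ℕ → ℝ) (j : ℕ) (z : ℂ) : ℂ :=
  ((z - (1 - (p j : ℂ))) / (p j : ℂ)) ^ d j

/-- `ftil j = f j ∘ ... ∘ f 1`, with `ftil 0 = id`. -/
def ftil (d : ℕ → ℕ) (p : ℕ → ℝ) : ℕ → ℂ → ℂ
  | 0 => id
  | j + 1 => f d p (j + 1) ∘ ftil d p j

/-- The fibered filled Julia set `E = {z : limsup_j |ftil j z| < ∞}`. -/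
def E (d : ℕ → ℕ) (p : ℕ → ℝ) : Set ℂ :=
  {z | Filter.limsup (fun j => (‖ftil d p j z‖₊ : ℝ≥0∞)) Filter.atTop < ⊤}

/-- `ι_λ(r) = (ftil (r-1) λ - (1 - p r)) / p r` for `r ≥ 1`. -/
def iota (d : ℕ → ℕ) (p : ℕ → ℝ) (lam : ℂ) (r : ℕ) : ℂ :=
  (ftil d p (r - 1) lam - (1 - (p r : ℂ))) / (p r : ℂ)

/-- `v_λ(n) = ∏_{r ≥ 1} ι_λ(r) ^ a_r(n)`, a finite product. -/
def vlam (d : ℕ → ℕ) (p : ℕ → ℝ) (lam : ℂ) (n : ℕ) : ℂ :=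
  ∏ᶠ r : ℕ, iota d p lam (r + 1) ^ digit d n (r + 1)

/-- The point spectrum of a continuous linear operator. -/
def pointSpectrum {M : Type*} [NormedAddCommGroup M] [NormedSpace ℂ M]
    (T : M →L[ℂ] M) : Set ℂ :=
  {lam | ∃ v, v ≠ 0 ∧ T v = lam • v}

/-- The residual spectrum: `T - λI` is injective but its range is not dense. -/
def residualSpectrum {M : Type*} [NormedAddCommGroup M] [NormedSpace ℂ M]
    (T : M →L[ℂ] M) : Set ℂ :=
  {lam | Function.Injective ⇑(T - lam • (1 : M →L[ℂ] M)) ∧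
    ¬ DenseRange ⇑(T - lam • (1 : M →L[ℂ] M))}

/-- The continuous spectrum: `T - λI` is injective with dense range, but not surjective. -/
def continuousSpectrum {M : Type*} [NormedAddCommGroup M] [NormedSpace ℂ M]
    (T : M →L[ℂ] M) : Set ℂ :=
  {lam | Function.Injective ⇑(T - lam • (1 : M →L[ℂ] M)) ∧
    DenseRange ⇑(T - lam • (1 : M →L[ℂ] M)) ∧
    Set.range ⇑(T - lam • (1 : M →L[ℂ] M)) ≠ Set.univ}

section Numeration

variable {d : ℕ → ℕ}

theorem d_pos (hd0 : d 0 = 1) (hd : ∀ j, 1 ≤ j → 2 ≤ d j) (i : ℕ) : 0 < d i := by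
  rcases i with _ | i
  · omega
  · linarith [hd (i + 1) (by omega)]

theorem q_zero (hd0 : d 0 = 1) : q d 0 = 1 := by simp [q, hd0]

theorem q_succ (d : ℕ → ℕ) (j : ℕ) : q d (j + 1) = q d j * d (j + 1) := prod_range_succ _ _

theorem q_pos (hd : ∀ i, 0 < d i) (j : ℕ) : 0 < q d j := prod_pos fun i _ => hd i

theorem q_dvd_q {i j : ℕ} (h : i ≤ j) : q d i ∣ q d j :=
  prod_dvd_prod_of_subset _ _ _ (range_subset_range.2 (by omega))

theorem q_strictMono (hd0 : d 0 = 1) (hd : ∀ j, 1 ≤ j → 2 ≤ d j) : StrictMono (q d) :=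
  strictMono_nat_of_lt_succ fun j => by
    rw [q_succ]
    exact lt_mul_of_one_lt_right (q_pos (d_pos hd0 hd) j) (hd (j + 1) (by omega))

theorem lt_q (hd0 : d 0 = 1) (hd : ∀ j, 1 ≤ j → 2 ≤ d j) (j : ℕ) : j < q d j := by
  induction j with
  | zero => simp [q_zero hd0]
  | succ j ih => exact lt_of_le_of_lt ih (q_strictMono hd0 hd (Nat.lt_succ_self j))

theorem sum_max_digits_mul_q (hd0 : d 0 = 1) (hd : ∀ j, 1 ≤ j → 2 ≤ d j) (r : ℕ) :
    ∑ j ∈ Icc 1 r, (d j - 1) * q d (j - 1) = q d r - 1 := by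
  induction r with
  | zero => simp [q_zero hd0]
  | succ r ih =>
    rw [sum_Icc_succ_top (by omega), ih, q_succ, Nat.add_sub_cancel, Nat.sub_one_mul,
      mul_comm (q d r)]
    have : q d r ≤ d (r + 1) * q d r := Nat.le_mul_of_pos_left _ (d_pos hd0 hd _)
    have := q_pos (d_pos hd0 hd) r
    omega

theorem digit_lt (hd : ∀ i, 0 < d i) (n j : ℕ) : digit d n j < d j := Nat.mod_lt _ (hd j)

theorem digit_eq_mod_div {j : ℕ} (hj : 1 ≤ j) (n : ℕ) :
    digit d n j = n % q d j / q d (j - 1) := by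
  obtain ⟨i, rfl⟩ := Nat.exists_eq_add_of_le' hj
  rw [q_succ, Nat.add_sub_cancel, Nat.mod_mul_right_div_self]
  rfl

theorem digit_eq_zero_of_lt_q {n j : ℕ} (h : n < q d (j - 1)) : digit d n j = 0 := by
  simp [digit, Nat.div_eq_of_lt h]

theorem digit_eq_zero_of_lt (hd0 : d 0 = 1) (hd : ∀ j, 1 ≤ j → 2 ≤ d j) {n j : ℕ}
    (h : n < j) : digit d n j = 0 :=
  digit_eq_zero_of_lt_q (by have := lt_q hd0 hd (j - 1); omega)

theorem digit_eq_of_div_eq {n n' k j : ℕ} (h : n / q d k = n' / q d k) (hj : k < j) :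
    digit d n j = digit d n' j := by
  obtain ⟨c, hc⟩ := q_dvd_q (d := d) (show k ≤ j - 1 by omega)
  simp only [digit, hc, ← Nat.div_div_eq_div_mul, h]

theorem digit_eq_of_mod_eq {n n' k j : ℕ} (h : n % q d k = n' % q d k) (hj : 1 ≤ j)
    (hjk : j ≤ k) : digit d n j = digit d n' j := by
  rw [digit_eq_mod_div hj, digit_eq_mod_div hj, ← Nat.mod_mod_of_dvd n (q_dvd_q hjk),
    ← Nat.mod_mod_of_dvd n' (q_dvd_q hjk), h]

theorem digit_eq_zero_of_dvd {n k j : ℕ} (h : q d k ∣ n) (hj : 1 ≤ j) (hjk : j ≤ k) :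
    digit d n j = 0 := by
  rw [digit_eq_of_mod_eq (n' := 0) (by simp [Nat.mod_eq_zero_of_dvd h]) hj hjk]
  simp [digit]

theorem digit_q (hd0 : d 0 = 1) (hd : ∀ j, 1 ≤ j → 2 ≤ d j) {r j : ℕ} (hj : 1 ≤ j) :
    digit d (q d r) j = if j = r + 1 then 1 else 0 := by
  rcases lt_trichotomy j (r + 1) with h | rfl | h
  · rw [if_neg h.ne]
    exact digit_eq_zero_of_dvd dvd_rfl hj (by omega)
  · simp [digit, Nat.div_self (q_pos (d_pos hd0 hd) r), Nat.mod_eq_of_lt (hd (r + 1) hj)]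
  · rw [if_neg h.ne']
    exact digit_eq_zero_of_lt_q (q_strictMono hd0 hd (by omega))

theorem mod_q_eq_of_digit_eq_max (hd0 : d 0 = 1) (hd : ∀ j, 1 ≤ j → 2 ≤ d j) {n r : ℕ}
    (h : ∀ j, 1 ≤ j → j ≤ r → digit d n j = d j - 1) : n % q d r = q d r - 1 := by
  induction r with
  | zero => simp [q_zero hd0, Nat.mod_one]
  | succ r ih =>
    have hdig : n / q d r % d (r + 1) = d (r + 1) - 1 := h (r + 1) (by omega) le_rfl
    rw [q_succ, Nat.mod_mul, ih fun j hj hjr => h j hj (by omega), hdig, Nat.mul_sub_one]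
    have := q_pos (d_pos hd0 hd) r
    have : q d r ≤ q d r * d (r + 1) := Nat.le_mul_of_pos_right _ (d_pos hd0 hd _)
    omega

end Numeration

section Zeta

variable {d : ℕ → ℕ}

theorem zeta_mem (hd0 : d 0 = 1) (hd : ∀ j, 1 ≤ j → 2 ≤ d j) (n : ℕ) :
    1 ≤ zeta d n ∧ digit d n (zeta d n) ≠ d (zeta d n) - 1 := by
  refine Nat.sInf_mem (s := {j | 1 ≤ j ∧ digit d n j ≠ d j - 1}) ⟨n + 1, by omega, ?_⟩
  rw [digit_eq_zero_of_lt hd0 hd (Nat.lt_succ_self n)]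
  have := hd (n + 1) (by omega)
  omega

theorem zeta_le {n j : ℕ} (hj : 1 ≤ j) (h : digit d n j ≠ d j - 1) : zeta d n ≤ j :=
  Nat.sInf_le ⟨hj, h⟩

theorem digit_of_lt_zeta {n j : ℕ} (hj : 1 ≤ j) (h : j < zeta d n) : digit d n j = d j - 1 := by
  by_contra hne
  exact absurd (zeta_le hj hne) (not_le.2 h)

theorem mod_q_of_lt_zeta (hd0 : d 0 = 1) (hd : ∀ j, 1 ≤ j → 2 ≤ d j) {n r : ℕ}
    (h : r < zeta d n) : n % q d r = q d r - 1 :=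
  mod_q_eq_of_digit_eq_max hd0 hd fun _ hj hjr => digit_of_lt_zeta hj (by omega)

theorem q_sub_one_le_of_lt_zeta (hd0 : d 0 = 1) (hd : ∀ j, 1 ≤ j → 2 ≤ d j) {n r : ℕ}
    (h : r < zeta d n) : q d r - 1 ≤ n :=
  mod_q_of_lt_zeta hd0 hd h ▸ Nat.mod_le n _

theorem sub_q_sub_one_of_lt_zeta (hd0 : d 0 = 1) (hd : ∀ j, 1 ≤ j → 2 ≤ d j) {n r : ℕ}
    (h : r < zeta d n) : n - (q d r - 1) = q d r * (n / q d r) := by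
  have := Nat.div_add_mod n (q d r)
  rw [mod_q_of_lt_zeta hd0 hd h] at this
  omega

theorem digit_sub_of_le_of_lt_zeta (hd0 : d 0 = 1) (hd : ∀ j, 1 ≤ j → 2 ≤ d j) {n r j : ℕ}
    (h : r < zeta d n) (hj : 1 ≤ j) (hjr : j ≤ r) : digit d (n - (q d r - 1)) j = 0 :=
  digit_eq_zero_of_dvd (sub_q_sub_one_of_lt_zeta hd0 hd h ▸ dvd_mul_right _ _) hj hjr

theorem digit_sub_of_lt_of_lt_zeta (hd0 : d 0 = 1) (hd : ∀ j, 1 ≤ j → 2 ≤ d j) {n r j : ℕ}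
    (h : r < zeta d n) (hrj : r < j) : digit d (n - (q d r - 1)) j = digit d n j :=
  digit_eq_of_div_eq (by rw [sub_q_sub_one_of_lt_zeta hd0 hd h,
    Nat.mul_div_cancel_left _ (q_pos (d_pos hd0 hd) r)]) hrj

theorem q_zeta_sub_one_dvd_succ (hd0 : d 0 = 1) (hd : ∀ j, 1 ≤ j → 2 ≤ d j) (n : ℕ) :
    q d (zeta d n - 1) ∣ n + 1 := by
  have hz : zeta d n - 1 < zeta d n := by have := (zeta_mem hd0 hd n).1; omega
  have := sub_q_sub_one_of_lt_zeta hd0 hd hz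
  have := q_sub_one_le_of_lt_zeta hd0 hd hz
  have := q_pos (d_pos hd0 hd) (zeta d n - 1)
  exact ⟨n / q d (zeta d n - 1) + 1, by rw [Nat.mul_add_one]; omega⟩

theorem digit_succ_of_lt_zeta (hd0 : d 0 = 1) (hd : ∀ j, 1 ≤ j → 2 ≤ d j) {n j : ℕ}
    (hj : 1 ≤ j) (h : j < zeta d n) : digit d (n + 1) j = 0 :=
  digit_eq_zero_of_dvd (q_zeta_sub_one_dvd_succ hd0 hd n) hj (by omega)

theorem digit_succ_zeta (hd0 : d 0 = 1) (hd : ∀ j, 1 ≤ j → 2 ≤ d j) (n : ℕ) :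
    digit d (n + 1) (zeta d n) = digit d n (zeta d n) + 1 := by
  obtain ⟨hz, hne⟩ := zeta_mem hd0 hd n
  have hlt := digit_lt (d_pos hd0 hd) n (zeta d n)
  unfold digit at hne hlt ⊢
  rw [Nat.succ_div_of_dvd (q_zeta_sub_one_dvd_succ hd0 hd n), Nat.add_mod,
    Nat.one_mod_eq_one.2 (by omega), Nat.mod_eq_of_lt (by omega)]

theorem digit_succ_of_zeta_lt (hd0 : d 0 = 1) (hd : ∀ j, 1 ≤ j → 2 ≤ d j) {n j : ℕ}
    (h : zeta d n < j) : digit d (n + 1) j = digit d n j := by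
  have hndvd : ¬ q d (zeta d n) ∣ n + 1 := fun hdvd => by
    have := digit_eq_zero_of_dvd hdvd (zeta_mem hd0 hd n).1 le_rfl
    rw [digit_succ_zeta hd0 hd] at this
    omega
  exact digit_eq_of_div_eq (Nat.succ_div_of_not_dvd hndvd) h

theorem zeta_mul_d_one (hd0 : d 0 = 1) (hd : ∀ j, 1 ≤ j → 2 ≤ d j) (k : ℕ) :
    zeta d (k * d 1) = 1 := by
  have hdig : digit d (k * d 1) 1 = 0 := by simp [digit, q_zero hd0]
  have := zeta_le (d := d) (n := k * d 1) le_rfl (by have := hd 1 le_rfl; omega)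
  have := (zeta_mem hd0 hd (k * d 1)).1
  omega

end Zeta

section Transition

variable {d : ℕ → ℕ} {p : ℕ → ℝ}

/-- The finite-sum form of `(S v)(n) = ∑' m, s n m * v m` (see `tsum_s_mul`). -/
def sApply (d : ℕ → ℕ) (p : ℕ → ℝ) (v : ℕ → ℂ) (n : ℕ) : ℂ :=
  (1 - (p 1 : ℂ)) * v n + (∏ j ∈ Icc 1 (zeta d n), (p j : ℂ)) * v (n + 1) +
    ∑ r ∈ Icc 1 (zeta d n - 1),
      (1 - (p (r + 1) : ℂ)) * (∏ j ∈ Icc 1 r, (p j : ℂ)) * v (n - (q d r - 1))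

theorem s_succ (n : ℕ) : s d p n (n + 1) = ∏ j ∈ Icc 1 (zeta d n), p j := by
  simp [s]

theorem s_self (n : ℕ) : s d p n n = 1 - p 1 := by
  simp [s]

theorem sub_q_sub_one_lt (hd0 : d 0 = 1) (hd : ∀ j, 1 ≤ j → 2 ≤ d j) {n r : ℕ}
    (hr : 1 ≤ r) (h : r < zeta d n) : n - (q d r - 1) < n := by
  have := q_sub_one_le_of_lt_zeta hd0 hd h
  have := q_strictMono hd0 hd hr
  rw [q_zero hd0] at this
  omega

theorem s_sub_q_sub_one (hd0 : d 0 = 1) (hd : ∀ j, 1 ≤ j → 2 ≤ d j) {n r : ℕ}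
    (hr : 1 ≤ r) (h : r < zeta d n) :
    s d p n (n - (q d r - 1)) = (1 - p (r + 1)) * ∏ j ∈ Icc 1 r, p j := by
  have hlt := sub_q_sub_one_lt hd0 hd hr h
  have hle := q_sub_one_le_of_lt_zeta hd0 hd h
  have hex : ∃ r', 1 ≤ r' ∧ r' + 1 ≤ zeta d n ∧
      n = n - (q d r - 1) + ∑ j ∈ Icc 1 r', (d j - 1) * q d (j - 1) :=
    ⟨r, hr, h, by rw [sum_max_digits_mul_q hd0 hd]; omega⟩
  rw [s, if_neg (by omega), if_neg hlt.ne, dif_pos hex]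
  obtain ⟨-, -, hchoose⟩ := hex.choose_spec
  rw [sum_max_digits_mul_q hd0 hd] at hchoose
  have := q_pos (d_pos hd0 hd) hex.choose
  rw [(q_strictMono hd0 hd).injective (show q d hex.choose = q d r by omega)]

theorem s_eq_zero (hd0 : d 0 = 1) (hd : ∀ j, 1 ≤ j → 2 ≤ d j) {n m : ℕ} (h1 : m ≠ n + 1)
    (h2 : m ≠ n) (h3 : ∀ r, 1 ≤ r → r < zeta d n → m ≠ n - (q d r - 1)) :
    s d p n m = 0 := by
  rw [s, if_neg h1, if_neg h2, dif_neg]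
  rintro ⟨r, hr, hrz, hn⟩
  rw [sum_max_digits_mul_q hd0 hd] at hn
  exact h3 r hr hrz (by omega)

theorem tsum_s_mul (hd0 : d 0 = 1) (hd : ∀ j, 1 ≤ j → 2 ≤ d j) (v : ℕ → ℂ) (n : ℕ) :
    ∑' m, (s d p n m : ℂ) * v m = sApply d p v n := by
  classical
  set R := Icc 1 (zeta d n - 1)
  have hR : ∀ {r}, r ∈ R ↔ 1 ≤ r ∧ r < zeta d n := by
    intro r; rw [mem_Icc]; have := (zeta_mem hd0 hd n).1; omega
  have hlt : ∀ r ∈ R, n - (q d r - 1) < n := fun r hr =>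
    sub_q_sub_one_lt hd0 hd (hR.1 hr).1 (hR.1 hr).2
  have hinj : Set.InjOn (fun r => n - (q d r - 1)) R := fun r hr r' hr' heq => by
    have := q_sub_one_le_of_lt_zeta hd0 hd (hR.1 hr).2
    have := q_sub_one_le_of_lt_zeta hd0 hd (hR.1 hr').2
    have := q_pos (d_pos hd0 hd) r
    have := q_pos (d_pos hd0 hd) r'
    exact (q_strictMono hd0 hd).injective (by simp only at heq; omega)
  have hsupp : ∀ m ∉ insert (n + 1) (insert n (R.image fun r => n - (q d r - 1))),
      (s d p n m : ℂ) * v m = 0 := fun m hm => by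
    simp only [mem_insert, mem_image, not_or, not_exists, not_and] at hm
    rw [s_eq_zero hd0 hd hm.1 hm.2.1 fun r hr hrz heq => hm.2.2 r (hR.2 ⟨hr, hrz⟩) heq.symm,
      Complex.ofReal_zero, zero_mul]
  rw [tsum_eq_sum hsupp, sum_insert, sum_insert, sum_image hinj, s_succ, s_self, sApply]
  · have hback : ∀ r ∈ R, (s d p n (n - (q d r - 1)) : ℂ) =
        (1 - (p (r + 1) : ℂ)) * ∏ j ∈ Icc 1 r, (p j : ℂ) := fun r hr => by
      rw [s_sub_q_sub_one hd0 hd (hR.1 hr).1 (hR.1 hr).2]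
      push_cast
      rfl
    rw [sum_congr rfl fun r hr => by rw [hback r hr]]
    push_cast
    ring
  · simp only [mem_image, not_exists, not_and]
    exact fun r hr heq => (hlt r hr).ne heq
  · simp only [mem_insert, mem_image, not_or, not_exists, not_and]
    exact ⟨by omega, fun r hr heq => by have := hlt r hr; omega⟩

theorem sApply_smul (c : ℂ) (v : ℕ → ℂ) (n : ℕ) :
    sApply d p (c • v) n = c * sApply d p v n := by
  simp only [sApply, Pi.smul_apply, smul_eq_mul, mul_add, mul_sum]
  ring_nf

theorem eq_of_sApply_eq_mul (hp : ∀ j, 1 ≤ j → p j ≠ 0) {lam : ℂ} {v w : ℕ → ℂ}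
    (hv : ∀ n, sApply d p v n = lam * v n) (hw : ∀ n, sApply d p w n = lam * w n)
    (h0 : v 0 = w 0) : v = w := by
  funext n
  induction n using Nat.strong_induction_on with
  | _ n ih =>
  rcases n with _ | n
  · exact h0
  have hP : (∏ j ∈ Icc 1 (zeta d n), (p j : ℂ)) ≠ 0 :=
    prod_ne_zero_iff.2 fun j hj => Complex.ofReal_ne_zero.2 (hp j (mem_Icc.1 hj).1)
  have hback : ∀ r ∈ Icc 1 (zeta d n - 1), v (n - (q d r - 1)) = w (n - (q d r - 1)) :=
    fun r _ => ih _ (by omega)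
  have hvn := hv n
  have hwn := hw n
  rw [sApply, ih n (by omega), sum_congr rfl fun r hr => by rw [hback r hr]] at hvn
  rw [sApply] at hwn
  exact mul_left_cancel₀ hP (by linear_combination hvn - hwn)

end Transition

section Iota

variable {d : ℕ → ℕ} {p : ℕ → ℝ}

theorem ftil_succ_apply (lam : ℂ) (r : ℕ) :
    ftil d p (r + 1) lam = iota d p lam (r + 1) ^ d (r + 1) := rfl

theorem p_mul_iota_succ_add {r : ℕ} (hp : p (r + 1) ≠ 0) (lam : ℂ) :
    (p (r + 1) : ℂ) * iota d p lam (r + 1) + (1 - p (r + 1)) = ftil d p r lam := by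
  rw [iota, Nat.add_sub_cancel, mul_div_cancel₀ _ (Complex.ofReal_ne_zero.2 hp)]
  ring

theorem ftil_surjective (hd : ∀ j, 1 ≤ j → 0 < d j) (hp : ∀ j, 1 ≤ j → p j ≠ 0)
    (r : ℕ) : Function.Surjective (ftil d p r) := by
  induction r with
  | zero => exact Function.surjective_id
  | succ r ih =>
    refine Function.Surjective.comp (fun w => ?_) ih
    obtain ⟨ξ, hξ⟩ := IsAlgClosed.exists_pow_nat_eq w (hd (r + 1) (by omega))
    refine ⟨p (r + 1) * ξ + (1 - p (r + 1)), ?_⟩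
    rw [f, add_sub_cancel_right,
      mul_div_cancel_left₀ _ (Complex.ofReal_ne_zero.2 (hp _ (by omega))), hξ]

theorem ftil_one (hp : ∀ j, 1 ≤ j → p j ≠ 0) (r : ℕ) : ftil d p r 1 = 1 := by
  induction r with
  | zero => rfl
  | succ r ih =>
    rw [ftil, Function.comp_apply, ih, f, sub_sub_cancel,
      div_self (Complex.ofReal_ne_zero.2 (hp _ (by omega))), one_pow]

theorem iota_one (hp : ∀ j, 1 ≤ j → p j ≠ 0) {r : ℕ} (hr : 1 ≤ r) :
    iota d p 1 r = 1 := by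
  rw [iota, ftil_one hp, sub_sub_cancel, div_self (Complex.ofReal_ne_zero.2 (hp r hr))]

/-- The eigen-equation of `v_λ` in row `n = q_w - 1`; every other row reduces to it once the
digits of `n` above `ζ_n` are factored out. -/
theorem sub_mul_prod_iota_pow (hd : ∀ j, 1 ≤ j → 0 < d j) (hp : ∀ j, 1 ≤ j → p j ≠ 0)
    (lam : ℂ) (w : ℕ) :
    (lam - (1 - p 1)) * ∏ j ∈ Ioc 0 w, iota d p lam j ^ (d j - 1) =
      (∏ j ∈ Icc 1 (w + 1), (p j : ℂ)) * iota d p lam (w + 1) +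
        ∑ r ∈ Icc 1 w, (1 - (p (r + 1) : ℂ)) * (∏ j ∈ Icc 1 r, (p j : ℂ)) *
          ∏ j ∈ Ioc r w, iota d p lam j ^ (d j - 1) := by
  induction w with
  | zero =>
    simp only [Ioc_self, prod_empty, zero_add, Icc_self, prod_singleton, mul_one,
      Icc_eq_empty_of_lt zero_lt_one, sum_empty, add_zero]
    have h : (p 1 : ℂ) * iota d p lam 1 + (1 - p 1) = lam := p_mul_iota_succ_add (hp 1 le_rfl) lam
    linear_combination -h
  | succ w ih =>
    have hstep : iota d p lam (w + 1) ^ (d (w + 1) - 1) * iota d p lam (w + 1) =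
        p (w + 2) * iota d p lam (w + 2) + (1 - p (w + 2)) := by
      rw [pow_sub_one_mul (hd (w + 1) (by omega)).ne', ← ftil_succ_apply,
        p_mul_iota_succ_add (hp _ (by omega))]
    have hsum : ∑ r ∈ Icc 1 w, (1 - (p (r + 1) : ℂ)) * (∏ j ∈ Icc 1 r, (p j : ℂ)) *
          ∏ j ∈ Ioc r (w + 1), iota d p lam j ^ (d j - 1) =
        (∑ r ∈ Icc 1 w, (1 - (p (r + 1) : ℂ)) * (∏ j ∈ Icc 1 r, (p j : ℂ)) *
          ∏ j ∈ Ioc r w, iota d p lam j ^ (d j - 1)) *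
          iota d p lam (w + 1) ^ (d (w + 1) - 1) := by
      rw [sum_mul]
      refine sum_congr rfl fun r hr => ?_
      rw [prod_Ioc_succ_top (mem_Icc.1 hr).2]
      ring
    rw [prod_Ioc_succ_top (Nat.zero_le w), sum_Icc_succ_top (by omega), hsum,
      prod_Icc_succ_top (by omega : 1 ≤ w + 1 + 1), Ioc_self, prod_empty]
    linear_combination iota d p lam (w + 1) ^ (d (w + 1) - 1) * ih +
      (∏ j ∈ Icc 1 (w + 1), (p j : ℂ)) * hstep

end Iota

section Vlam

variable {d : ℕ → ℕ} {p : ℕ → ℝ}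

theorem vlam_eq_prod {lam : ℂ} {n N : ℕ} (hN : ∀ j, N < j → digit d n j = 0) :
    vlam d p lam n = ∏ j ∈ Ioc 0 N, iota d p lam j ^ digit d n j := by
  rw [vlam, finprod_eq_prod_of_mulSupport_subset (s := range N), range_eq_Ico,
    prod_Ico_add' (fun j => iota d p lam j ^ digit d n j), Ico_add_one_add_one_eq_Ioc]
  intro r hr
  by_contra hrN
  rw [coe_range, Set.mem_Iio, not_lt] at hrN
  exact hr (by simp only [hN (r + 1) (by omega), pow_zero])

theorem vlam_zero (lam : ℂ) : vlam d p lam 0 = 1 := by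
  simp [vlam, digit]

theorem vlam_ne_zero (lam : ℂ) : vlam d p lam ≠ 0 := fun h =>
  one_ne_zero ((vlam_zero lam).symm.trans (congrFun h 0))

theorem vlam_one (hp : ∀ j, 1 ≤ j → p j ≠ 0) : vlam d p 1 = 1 := by
  ext n
  simp [vlam, iota_one hp]

theorem vlam_q (hd0 : d 0 = 1) (hd : ∀ j, 1 ≤ j → 2 ≤ d j) (lam : ℂ) (r : ℕ) :
    vlam d p lam (q d r) = iota d p lam (r + 1) := by
  rw [vlam_eq_prod (N := r + 1) fun j hj => by rw [digit_q hd0 hd (by omega), if_neg hj.ne'],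
    prod_eq_single (r + 1)]
  · rw [digit_q hd0 hd (by omega), if_pos rfl, pow_one]
  · intro j hj hjr
    rw [digit_q hd0 hd (mem_Ioc.1 hj).1, if_neg hjr, pow_zero]
  · simp

theorem vlam_eq_mul_prod (hd0 : d 0 = 1) (hd : ∀ j, 1 ≤ j → 2 ≤ d j) (lam : ℂ)
    {m w N : ℕ} (hm : m ≤ N) (hw : w + 1 ≤ N) :
    vlam d p lam m = (∏ j ∈ Ioc 0 w, iota d p lam j ^ digit d m j) *
      iota d p lam (w + 1) ^ digit d m (w + 1) *
      ∏ j ∈ Ioc (w + 1) N, iota d p lam j ^ digit d m j := by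
  rw [vlam_eq_prod (N := N) fun j hj => digit_eq_zero_of_lt hd0 hd (by omega),
    ← prod_Ioc_consecutive _ (Nat.zero_le (w + 1)) hw, prod_Ioc_succ_top (Nat.zero_le w)]

theorem sApply_vlam (hd0 : d 0 = 1) (hd : ∀ j, 1 ≤ j → 2 ≤ d j)
    (hp : ∀ j, 1 ≤ j → p j ≠ 0) (lam : ℂ) (n : ℕ) :
    sApply d p (vlam d p lam) n = lam * vlam d p lam n := by
  obtain ⟨w, hw⟩ : ∃ w, zeta d n = w + 1 :=
    ⟨zeta d n - 1, by have := (zeta_mem hd0 hd n).1; omega⟩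
  have hwn : w + 1 ≤ n + 1 := by
    have := q_sub_one_le_of_lt_zeta hd0 hd (show w < zeta d n by omega)
    have := lt_q hd0 hd w
    omega
  set I := iota d p lam
  set Q : ℕ → ℂ := fun r => ∏ j ∈ Ioc r w, I j ^ (d j - 1)
  set C := I (w + 1) ^ digit d n (w + 1) * ∏ j ∈ Ioc (w + 1) (n + 1), I j ^ digit d n j
  have hlt : ∀ j ∈ Ioc 0 w, j < zeta d n := fun j hj => by
    rw [hw]; exact Nat.lt_succ_of_le (mem_Ioc.1 hj).2
  have hmax : ∀ j ∈ Ioc 0 w, digit d n j = d j - 1 := fun j hj =>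
    digit_of_lt_zeta (mem_Ioc.1 hj).1 (hlt j hj)
  have h_self : vlam d p lam n = Q 0 * C := by
    rw [vlam_eq_mul_prod hd0 hd lam (Nat.le_succ n) hwn, prod_congr rfl fun j hj => by
      rw [hmax j hj], mul_assoc]
  have h_succ : vlam d p lam (n + 1) = I (w + 1) * C := by
    have hlow : ∏ j ∈ Ioc 0 w, I j ^ digit d (n + 1) j = 1 := prod_eq_one fun j hj => by
      rw [digit_succ_of_lt_zeta hd0 hd (mem_Ioc.1 hj).1 (hlt j hj), pow_zero]
    have hmid : digit d (n + 1) (w + 1) = digit d n (w + 1) + 1 := hw ▸ digit_succ_zeta hd0 hd n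
    have htop : ∏ j ∈ Ioc (w + 1) (n + 1), I j ^ digit d (n + 1) j =
        ∏ j ∈ Ioc (w + 1) (n + 1), I j ^ digit d n j := prod_congr rfl fun j hj => by
      rw [digit_succ_of_zeta_lt hd0 hd (by rw [hw]; exact (mem_Ioc.1 hj).1)]
    rw [vlam_eq_mul_prod hd0 hd lam le_rfl hwn, hlow, hmid, htop]
    ring
  have h_back : ∀ r ∈ Icc 1 w, vlam d p lam (n - (q d r - 1)) = Q r * C := by
    intro r hr
    obtain ⟨hr1, hrw⟩ := mem_Icc.1 hr
    have hrz : r < zeta d n := by omega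
    have hlow : ∏ j ∈ Ioc 0 r, I j ^ digit d (n - (q d r - 1)) j = 1 :=
      prod_eq_one fun j hj => by
        rw [digit_sub_of_le_of_lt_zeta hd0 hd hrz (mem_Ioc.1 hj).1 (mem_Ioc.1 hj).2, pow_zero]
    have hmid : ∏ j ∈ Ioc r w, I j ^ digit d (n - (q d r - 1)) j = Q r :=
      prod_congr rfl fun j hj => by
        rw [digit_sub_of_lt_of_lt_zeta hd0 hd hrz (mem_Ioc.1 hj).1,
          hmax j (Ioc_subset_Ioc_left (Nat.zero_le r) hj)]
    have htop : I (w + 1) ^ digit d (n - (q d r - 1)) (w + 1) *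
        ∏ j ∈ Ioc (w + 1) (n + 1), I j ^ digit d (n - (q d r - 1)) j = C := by
      rw [digit_sub_of_lt_of_lt_zeta (j := w + 1) hd0 hd hrz (by omega),
        prod_congr rfl fun j hj => by
          rw [digit_sub_of_lt_of_lt_zeta hd0 hd hrz (by have := (mem_Ioc.1 hj).1; omega)]]
    rw [vlam_eq_mul_prod hd0 hd lam (by omega) hwn, ← prod_Ioc_consecutive _ (Nat.zero_le r) hrw,
      hlow, hmid, one_mul, mul_assoc, htop]
  have key : (lam - (1 - p 1)) * Q 0 = (∏ j ∈ Icc 1 (w + 1), (p j : ℂ)) * I (w + 1) +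
      ∑ r ∈ Icc 1 w, (1 - (p (r + 1) : ℂ)) * (∏ j ∈ Icc 1 r, (p j : ℂ)) * Q r :=
    sub_mul_prod_iota_pow (fun j hj => by linarith [hd j hj]) hp lam w
  rw [sApply, h_self, h_succ, hw, Nat.add_sub_cancel, sum_congr rfl fun r hr => by rw [h_back r hr]]
  simp only [← mul_assoc, ← sum_mul]
  linear_combination -C * key

theorem eq_smul_vlam_of_sApply_eq (hd0 : d 0 = 1) (hd : ∀ j, 1 ≤ j → 2 ≤ d j)
    (hp : ∀ j, 1 ≤ j → p j ≠ 0) {lam : ℂ} {v : ℕ → ℂ}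
    (hv : ∀ n, sApply d p v n = lam * v n) : v = v 0 • vlam d p lam :=
  eq_of_sApply_eq_mul hp hv
    (fun n => by rw [sApply_smul, sApply_vlam hd0 hd hp, Pi.smul_apply, smul_eq_mul]; ring)
    (by rw [Pi.smul_apply, vlam_zero, smul_eq_mul, mul_one])

end Vlam

section Limits

variable {d : ℕ → ℕ} {p : ℕ → ℝ}

theorem limit_eq_zero_of_sApply_eq (hd0 : d 0 = 1) (hd : ∀ j, 1 ≤ j → 2 ≤ d j) {lam l : ℂ}
    {v : ℕ → ℂ} (hv : ∀ n, sApply d p v n = lam * v n) (hl : Tendsto v atTop (𝓝 l))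
    (hlam : lam ≠ 1) : l = 0 := by
  have hstep : ∀ k, (lam - 1) * v (k * d 1) = p 1 * (v (k * d 1 + 1) - v (k * d 1)) := fun k => by
    have h := hv (k * d 1)
    rw [sApply, zeta_mul_d_one hd0 hd, Nat.sub_self, Icc_self, prod_singleton,
      Icc_eq_empty_of_lt zero_lt_one, sum_empty, add_zero] at h
    linear_combination -h
  have hsub : Tendsto (fun k => k * d 1) atTop atTop :=
    tendsto_atTop_mono (fun k => Nat.le_mul_of_pos_right k (by linarith [hd 1 le_rfl])) tendsto_id
  have hL : Tendsto (fun k => (lam - 1) * v (k * d 1)) atTop (𝓝 ((lam - 1) * l)) :=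
    (hl.comp hsub).const_mul _
  have hR : Tendsto (fun k => (lam - 1) * v (k * d 1)) atTop (𝓝 (p 1 * (l - l))) := by
    simp_rw [hstep]
    exact ((hl.comp ((tendsto_add_atTop_nat 1).comp hsub)).sub (hl.comp hsub)).const_mul _
  have hlim := tendsto_nhds_unique hL hR
  rw [sub_self, mul_zero, mul_eq_zero] at hlim
  exact hlim.resolve_left (sub_ne_zero.2 hlam)

theorem p_mul_iota_succ {r : ℕ} (hp : p (r + 1) ≠ 0) (hr : 1 ≤ r) (lam : ℂ) :
    (p (r + 1) : ℂ) * iota d p lam (r + 1) = iota d p lam r ^ d r - (1 - p (r + 1)) := by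
  obtain ⟨s, rfl⟩ := Nat.exists_eq_add_of_le' hr
  rw [← ftil_succ_apply, ← p_mul_iota_succ_add hp]
  ring

theorem norm_one_sub_ofReal {x : ℝ} (hx : x ≤ 1) : ‖(1 - x : ℂ)‖ = 1 - x := by
  rw [← Complex.ofReal_one, ← Complex.ofReal_sub, Complex.norm_real,
    Real.norm_of_nonneg (by linarith)]

theorem p_mul_norm_iota_succ_le {r : ℕ} (hp : p (r + 1) ∈ Set.Ioc 0 1) (hr : 1 ≤ r)
    (lam : ℂ) :
    p (r + 1) * ‖iota d p lam (r + 1)‖ ≤ ‖iota d p lam r‖ ^ d r + (1 - p (r + 1)) := by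
  have h := congrArg norm (p_mul_iota_succ (d := d) hp.1.ne' hr lam)
  rw [norm_mul, Complex.norm_real, Real.norm_of_nonneg hp.1.le] at h
  rw [h, ← norm_pow, ← norm_one_sub_ofReal hp.2]
  exact norm_sub_le _ _

theorem one_sub_p_le {r : ℕ} (hp : p (r + 1) ∈ Set.Ioc 0 1) (hr : 1 ≤ r) (lam : ℂ) :
    1 - p (r + 1) ≤ ‖iota d p lam r‖ ^ d r + ‖iota d p lam (r + 1)‖ := by
  have h : (1 - p (r + 1) : ℂ) = iota d p lam r ^ d r - p (r + 1) * iota d p lam (r + 1) := by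
    rw [p_mul_iota_succ hp.1.ne' hr]; ring
  have hle : ‖(p (r + 1) : ℂ) * iota d p lam (r + 1)‖ ≤ ‖iota d p lam (r + 1)‖ := by
    rw [norm_mul, Complex.norm_real, Real.norm_of_nonneg hp.1.le]
    exact mul_le_of_le_one_left (norm_nonneg _) hp.2
  calc 1 - p (r + 1) = ‖(1 - p (r + 1) : ℂ)‖ := (norm_one_sub_ofReal hp.2).symm
    _ ≤ ‖iota d p lam r ^ d r‖ + ‖(p (r + 1) : ℂ) * iota d p lam (r + 1)‖ :=
        h ▸ norm_sub_le _ _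
    _ ≤ ‖iota d p lam r‖ ^ d r + ‖iota d p lam (r + 1)‖ := by rw [norm_pow]; gcongr

theorem tendsto_p_of_tendsto_iota (hd : ∀ j, 1 ≤ j → 0 < d j)
    (hp : ∀ j, 1 ≤ j → p j ∈ Set.Ioc 0 1) {lam : ℂ}
    (h : Tendsto (iota d p lam) atTop (𝓝 0)) : Tendsto p atTop (𝓝 1) := by
  have hnorm : Tendsto (fun r => ‖iota d p lam r‖) atTop (𝓝 0) :=
    tendsto_zero_iff_norm_tendsto_zero.1 h
  have hpow : ∀ᶠ r in atTop, ‖iota d p lam r‖ ^ d r ≤ ‖iota d p lam r‖ := by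
    filter_upwards [hnorm.eventually (ge_mem_nhds zero_lt_one), eventually_ge_atTop 1] with r hr1 hr
    exact pow_le_of_le_one (norm_nonneg _) hr1 (hd r hr).ne'
  have hδ : Tendsto (fun r => 1 - p (r + 1)) atTop (𝓝 0) := by
    refine squeeze_zero' (Eventually.of_forall fun r => by linarith [(hp (r + 1) (by omega)).2])
      ?_ (by simpa using hnorm.add (hnorm.comp (tendsto_add_atTop_nat 1)))
    filter_upwards [hpow, eventually_ge_atTop 1] with r hr hr1
    linarith [one_sub_p_le (d := d) (hp (r + 1) (by omega)) hr1 lam]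
  refine (tendsto_add_atTop_iff_nat 1).1 ?_
  simpa using (tendsto_const_nhds (x := (1 : ℝ))).sub hδ

theorem tendsto_zero_of_le_half_add {x e : ℕ → ℝ} (hx : ∀ r, 0 ≤ x r)
    (he : Tendsto e atTop (𝓝 0)) (h : ∀ᶠ r in atTop, x (r + 1) ≤ x r / 2 + e r) :
    Tendsto x atTop (𝓝 0) := by
  refine Metric.tendsto_atTop.2 fun ε hε => ?_
  obtain ⟨N, hN⟩ :=
    eventually_atTop.1 (h.and (he.eventually (gt_mem_nhds (by positivity : 0 < ε / 4))))
  have hdecay : ∀ m, x (N + m) ≤ x N / 2 ^ m + ε / 2 := by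
    intro m
    induction m with
    | zero => rw [add_zero, pow_zero, div_one]; linarith
    | succ m ih =>
      have := hN (N + m) (by omega)
      rw [← add_assoc, pow_succ]
      calc x (N + m + 1) ≤ (x N / 2 ^ m + ε / 2) / 2 + ε / 4 := by linarith
        _ = x N / (2 ^ m * 2) + ε / 2 := by ring
  obtain ⟨M, hM⟩ := eventually_atTop.1 (((tendsto_const_nhds (x := x N)).div_atTop
    (tendsto_pow_atTop_atTop_of_one_lt one_lt_two)).eventually (gt_mem_nhds (half_pos hε)))
  refine ⟨N + M, fun r hr => ?_⟩
  obtain ⟨m, rfl⟩ := Nat.exists_eq_add_of_le (show N ≤ r by omega)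
  rw [Real.dist_eq, sub_zero, abs_of_nonneg (hx _)]
  linarith [hdecay m, hM m (by omega)]

theorem norm_iota_succ_le_half {r : ℕ} (hp : p (r + 1) ∈ Set.Ioc 0 1)
    (hδ : 1 - p (r + 1) ≤ 1 / 16) (hr : 1 ≤ r) (hdr : 2 ≤ d r) {lam : ℂ}
    (hx : ‖iota d p lam r‖ ≤ 1 / 4) :
    ‖iota d p lam (r + 1)‖ ≤ ‖iota d p lam r‖ / 2 + 2 * (1 - p (r + 1)) := by
  have hmain := p_mul_norm_iota_succ_le (d := d) hp hr lam
  have hsq : ‖iota d p lam r‖ ^ d r ≤ ‖iota d p lam r‖ ^ 2 :=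
    pow_le_pow_of_le_one (norm_nonneg _) (by linarith) hdr
  nlinarith [norm_nonneg (iota d p lam r), norm_nonneg (iota d p lam (r + 1))]

theorem exists_tendsto_iota_zero (hd : ∀ j, 1 ≤ j → 2 ≤ d j)
    (hp : ∀ j, 1 ≤ j → p j ∈ Set.Ioc 0 1) (h : Tendsto p atTop (𝓝 1)) :
    ∃ lam ≠ 1, Tendsto (iota d p lam) atTop (𝓝 0) := by
  obtain ⟨K, hK⟩ :=
    eventually_atTop.1 (h.eventually (Ici_mem_nhds (by norm_num : (15 / 16 : ℝ) < 1)))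
  obtain ⟨lam, hlam⟩ := ftil_surjective (d := d) (fun j hj => by linarith [hd j hj])
    (fun j hj => (hp j hj).1.ne') (K + 1) (1 - p (K + 2))
  have hzero : iota d p lam (K + 2) = 0 := by simp [iota, hlam]
  have hδ : ∀ r, K + 2 ≤ r → 1 - p (r + 1) ≤ 1 / 16 := fun r hr => by
    linarith [show (15 / 16 : ℝ) ≤ p (r + 1) from hK (r + 1) (by omega)]
  have hsmall : ∀ m, ‖iota d p lam (K + 2 + m)‖ ≤ 1 / 4 := by
    intro m
    induction m with
    | zero => simp [hzero]
    | succ m ih =>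
      have := norm_iota_succ_le_half (hp _ (by omega)) (hδ _ (by omega)) (by omega)
        (hd _ (by omega)) ih
      have := hδ (K + 2 + m) (by omega)
      rw [← add_assoc]
      linarith
  refine ⟨lam, fun h1 => by simp [h1, iota_one (fun j hj => (hp j hj).1.ne')] at hzero, ?_⟩
  refine tendsto_zero_iff_norm_tendsto_zero.2 (tendsto_zero_of_le_half_add (fun _ => norm_nonneg _)
    (e := fun r => 2 * (1 - p (r + 1))) ?_ ?_)
  · simpa using ((h.comp (tendsto_add_atTop_nat 1)).const_sub 1).const_mul 2
  · filter_upwards [eventually_ge_atTop (K + 2)] with r hr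
    obtain ⟨m, rfl⟩ := Nat.exists_eq_add_of_le hr
    exact norm_iota_succ_le_half (hp _ (by omega)) (hδ _ hr) (by omega) (hd _ (by omega))
      (hsmall m)

theorem exists_lt_digit_ne_zero (hd0 : d 0 = 1) (hd : ∀ j, 1 ≤ j → 2 ≤ d j) {n R : ℕ}
    (h : q d R ≤ n) : ∃ T, R < T ∧ digit d n T ≠ 0 := by
  classical
  have hex : ∃ T, n < q d T := ⟨n, lt_q hd0 hd n⟩
  have hpos : 0 < Nat.find hex := (Nat.find_pos hex).2 fun h0 => by
    have := (q_strictMono hd0 hd).monotone (Nat.zero_le R)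
    rw [q_zero hd0] at h0 this
    omega
  obtain ⟨S, hS⟩ := Nat.exists_eq_add_of_lt hpos
  rw [zero_add] at hS
  have hlt : n < q d (S + 1) := hS ▸ Nat.find_spec hex
  have hle : q d S ≤ n := not_lt.1 (Nat.find_min hex (by omega))
  have hRS : R ≤ S := by
    by_contra! hSR
    exact absurd ((q_strictMono hd0 hd).monotone (show S + 1 ≤ R by omega)) (by omega)
  have hqS := q_pos (d_pos hd0 hd) S
  refine ⟨S + 1, by omega, ?_⟩
  rw [q_succ, mul_comm] at hlt
  rw [digit, Nat.add_sub_cancel, Nat.mod_eq_of_lt ((Nat.div_lt_iff_lt_mul hqS).2 hlt)]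
  exact (Nat.div_pos hle hqS).ne'

theorem norm_vlam_le (hd0 : d 0 = 1) (hd : ∀ j, 1 ≤ j → 2 ≤ d j) {lam : ℂ} {K T n : ℕ}
    (hK : ∀ j, K < j → ‖iota d p lam j‖ ≤ 1) (hKT : K < T) (hT : digit d n T ≠ 0) :
    ‖vlam d p lam n‖ ≤
      (∏ j ∈ Ioc 0 K, max 1 ‖iota d p lam j‖ ^ d j) * ‖iota d p lam T‖ := by
  have hTn : T ≤ n := by
    by_contra! h
    exact hT (digit_eq_zero_of_lt hd0 hd h)
  have hlow : ‖∏ j ∈ Ioc 0 K, iota d p lam j ^ digit d n j‖ ≤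
      ∏ j ∈ Ioc 0 K, max 1 ‖iota d p lam j‖ ^ d j := by
    rw [norm_prod]
    refine prod_le_prod (fun _ _ => norm_nonneg _) fun j _ => ?_
    rw [norm_pow]
    calc ‖iota d p lam j‖ ^ digit d n j ≤ max 1 ‖iota d p lam j‖ ^ digit d n j := by
          gcongr; exact le_max_right _ _
      _ ≤ max 1 ‖iota d p lam j‖ ^ d j :=
          pow_le_pow_right₀ (le_max_left _ _) (digit_lt (d_pos hd0 hd) n j).le
  have hhigh : ‖∏ j ∈ Ioc K n, iota d p lam j ^ digit d n j‖ ≤ ‖iota d p lam T‖ := by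
    rw [← mul_prod_erase _ _ (mem_Ioc.2 ⟨hKT, hTn⟩), norm_mul, norm_prod, norm_pow]
    refine (mul_le_of_le_one_right (by positivity) (prod_le_one (fun _ _ => norm_nonneg _)
      fun j hj => ?_)).trans (pow_le_of_le_one (norm_nonneg _) (hK T hKT) hT)
    rw [norm_pow]
    exact pow_le_one₀ (norm_nonneg _) (hK j (mem_Ioc.1 (mem_of_mem_erase hj)).1)
  rw [vlam_eq_prod (N := n) fun j hj => digit_eq_zero_of_lt hd0 hd hj,
    ← prod_Ioc_consecutive _ (Nat.zero_le K) (by omega : K ≤ n), norm_mul]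
  exact mul_le_mul hlow hhigh (norm_nonneg _) (prod_nonneg fun _ _ => by positivity)

theorem tendsto_vlam_zero (hd0 : d 0 = 1) (hd : ∀ j, 1 ≤ j → 2 ≤ d j) {lam : ℂ}
    (h : Tendsto (iota d p lam) atTop (𝓝 0)) : Tendsto (vlam d p lam) atTop (𝓝 0) := by
  have hnorm := tendsto_zero_iff_norm_tendsto_zero.1 h
  obtain ⟨K, hK⟩ := eventually_atTop.1 (hnorm.eventually (ge_mem_nhds zero_lt_one))
  set B := ∏ j ∈ Ioc 0 K, max 1 ‖iota d p lam j‖ ^ d j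
  have hB : 0 < B := prod_pos fun j _ => pow_pos (lt_max_of_lt_left one_pos) _
  refine Metric.tendsto_atTop.2 fun ε hε => ?_
  obtain ⟨R, hR⟩ := eventually_atTop.1 (hnorm.eventually (gt_mem_nhds (div_pos hε hB)))
  refine ⟨q d (max K R), fun n hn => ?_⟩
  obtain ⟨T, hT, hdig⟩ := exists_lt_digit_ne_zero hd0 hd hn
  rw [dist_zero_right]
  calc ‖vlam d p lam n‖ ≤ B * ‖iota d p lam T‖ :=
        norm_vlam_le hd0 hd (fun j hj => hK j hj.le) (by omega) hdig
    _ < B * (ε / B) := by gcongr; exact hR T (by omega)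
    _ = ε := mul_div_cancel₀ _ hB.ne'

theorem eq_zero_of_sApply_eq_of_tendsto_zero (hd0 : d 0 = 1) (hd : ∀ j, 1 ≤ j → 2 ≤ d j)
    (hp : ∀ j, 1 ≤ j → p j ∈ Set.Ioc 0 1) (hnp : ¬ Tendsto p atTop (𝓝 1)) {lam : ℂ}
    {v : ℕ → ℂ} (hv : ∀ n, sApply d p v n = lam * v n) (h0 : Tendsto v atTop (𝓝 0)) :
    v = 0 := by
  have hvl := eq_smul_vlam_of_sApply_eq hd0 hd (fun j hj => (hp j hj).1.ne') hv
  by_contra hne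
  have hv0 : v 0 ≠ 0 := fun h => hne (by rw [hvl, h, zero_smul])
  have hiota : (fun r => (v 0)⁻¹ * v (q d r)) = fun r => iota d p lam (r + 1) :=
    funext fun r => by
      rw [congrFun hvl (q d r), Pi.smul_apply, smul_eq_mul, vlam_q hd0 hd,
        inv_mul_cancel_left₀ hv0]
  have hlim : Tendsto (fun r => (v 0)⁻¹ * v (q d r)) atTop (𝓝 0) := by
    simpa using (h0.comp (q_strictMono hd0 hd).tendsto_atTop).const_mul (v 0)⁻¹
  rw [hiota] at hlim
  exact hnp (tendsto_p_of_tendsto_iota (fun j hj => by linarith [hd j hj]) hp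
    ((tendsto_add_atTop_iff_nat 1).1 hlim))

end Limits

/-- `σ_p(S on c) = σ_p(S on c₀) ∪ {1}` (in eigenvector form), and
`σ_p(S on c) = {1}` iff `(p_n)` does not converge to `1`. -/
theorem stmt15 (d : ℕ → ℕ) (p : ℕ → ℝ)
    (hd0 : d 0 = 1) (hd : ∀ j, 1 ≤ j → 2 ≤ d j)
    (hp : ∀ j, 1 ≤ j → p j ∈ Set.Ioc (0 : ℝ) 1) :
    {lam : ℂ | ∃ v : ℕ → ℂ, (∃ l : ℂ, Filter.Tendsto v Filter.atTop (nhds l)) ∧ v ≠ 0 ∧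
        ∀ n, ∑' m : ℕ, (s d p n m : ℂ) * v m = lam * v n} =
      {lam : ℂ | ∃ v : ℕ → ℂ, Filter.Tendsto v Filter.atTop (nhds (0 : ℂ)) ∧ v ≠ 0 ∧
        ∀ n, ∑' m : ℕ, (s d p n m : ℂ) * v m = lam * v n} ∪ {1} ∧
      ({lam : ℂ | ∃ v : ℕ → ℂ, (∃ l : ℂ, Filter.Tendsto v Filter.atTop (nhds l)) ∧ v ≠ 0 ∧
        ∀ n, ∑' m : ℕ, (s d p n m : ℂ) * v m = lam * v n} = {1} ↔
        ¬ Filter.Tendsto (fun n => p n) Filter.atTop (nhds (1 : ℝ))) := by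
  have hp0 : ∀ j, 1 ≤ j → p j ≠ 0 := fun j hj => (hp j hj).1.ne'
  simp only [tsum_s_mul hd0 hd]
  set A := {lam : ℂ | ∃ v : ℕ → ℂ, (∃ l, Tendsto v atTop (𝓝 l)) ∧ v ≠ 0 ∧
    ∀ n, sApply d p v n = lam * v n}
  set A₀ := {lam : ℂ | ∃ v : ℕ → ℂ, Tendsto v atTop (𝓝 0) ∧ v ≠ 0 ∧
    ∀ n, sApply d p v n = lam * v n}
  have hsplit : A = A₀ ∪ {1} := by
    ext lam
    refine ⟨fun ⟨v, ⟨l, hl⟩, hne, hv⟩ => ?_, ?_⟩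
    · by_cases hlam : lam = 1
      · exact Or.inr hlam
      · exact Or.inl ⟨v, limit_eq_zero_of_sApply_eq hd0 hd hv hl hlam ▸ hl, hne, hv⟩
    · rintro (⟨v, hl, hne, hv⟩ | rfl)
      · exact ⟨v, ⟨0, hl⟩, hne, hv⟩
      · exact ⟨vlam d p 1, ⟨1, vlam_one hp0 ▸ tendsto_const_nhds⟩, vlam_ne_zero 1,
          sApply_vlam hd0 hd hp0 1⟩
  refine ⟨hsplit, fun hA htend => ?_, fun hnp => ?_⟩
  · obtain ⟨lam, hlam, hiota⟩ := exists_tendsto_iota_zero hd hp htend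
    have hmem : lam ∈ A :=
      ⟨vlam d p lam, ⟨0, tendsto_vlam_zero hd0 hd hiota⟩, vlam_ne_zero lam,
        sApply_vlam hd0 hd hp0 lam⟩
    exact hlam (hA ▸ hmem : lam ∈ ({1} : Set ℂ))
  · have hA₀ : A₀ = ∅ := Set.eq_empty_of_forall_notMem fun lam ⟨v, hl, hne, hv⟩ =>
      hne (eq_zero_of_sApply_eq_of_tendsto_zero hd0 hd hp hnp hv hl)
    rw [hsplit, hA₀, Set.empty_union]

end AMFC
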